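/- arXiv:2307.14685 — 4 statements merged into one kernel-verified Lean document; each statement's English description precedes it below -/
import Mathlib

section
/- The three-stage DIRK method with a_{11}=a_{22}=a_{33}=λ, a_{21}=(1-λ)/2, a_{31}=-3λ²/2+4λ-1/4, a_{32}=3λ²/2-5λ+5/4, b₁=a_{31}, b₂=a_{32}, b₃=λ, c₁=λ, c₂=(1+λ)/2, c₃=1, satisfies the third-order conditions Σb_i = 1, Σb_i c_i = 1/2, Σb_i c_i² = 1/3, and Σ_{i,j} b_i a_{ij} c_j = 1/6, where λ is the real root of the cubic λ³ - 3λ² + (3/2)λ - 1/6 = 0 lying in (1/6, 1/2). -/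
/-- Alexander's three-stage DIRK scheme with diagonal coefficient `λ` the root
of `λ³ - 3λ² + (3/2)λ - 1/6 = 0` in `(1/6, 1/2)` satisfies the third-order
conditions `Σb_i = 1`, `Σb_i c_i = 1/2`, `Σb_i c_i² = 1/3`,
`Σ_{i,j} b_i a_{ij} c_j = 1/6`. -/
theorem dirk3_order_conditions (lam : ℝ)
    (hroot : lam ^ 3 - 3 * lam ^ 2 + (3 / 2) * lam - 1 / 6 = 0)
    (hmem : lam ∈ Set.Ioo (1 / 6 : ℝ) (1 / 2))
    (a : Fin 3 → Fin 3 → ℝ) (b c : Fin 3 → ℝ)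
    (ha : a = ![![lam, 0, 0],
                ![(1 - lam) / 2, lam, 0],
                ![-3 * lam ^ 2 / 2 + 4 * lam - 1 / 4,
                  3 * lam ^ 2 / 2 - 5 * lam + 5 / 4, lam]])
    (hb : b = ![-3 * lam ^ 2 / 2 + 4 * lam - 1 / 4,
                3 * lam ^ 2 / 2 - 5 * lam + 5 / 4, lam])
    (hc : c = ![lam, (1 + lam) / 2, 1]) :
    (∑ i, b i = 1) ∧
    (∑ i, b i * c i = 1 / 2) ∧
    (∑ i, b i * c i ^ 2 = 1 / 3) ∧
    (∑ i, ∑ j, b i * a i j * c j = 1 / 6) := by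
  subst ha hb hc
  refine ⟨?_, ?_, ?_, ?_⟩ <;>
    simp [Fin.sum_univ_three] <;> nlinarith [hroot, sq_nonneg lam]
end

section
/- The cubic polynomial λ³ - 3λ² + (3/2)λ - 1/6 has exactly one root in the interval (1/6, 1/2). -/
private lemma dirk3_root_gt (a : ℝ) (h1 : 1/6 < a) (h2 : a < 1/2)
    (hr : a ^ 3 - 3 * a ^ 2 + (3/2) * a - 1/6 = 0) : 2/5 < a := by
  by_contra h
  push_neg at h
  nlinarith [sq_nonneg (a - 1/6), sq_nonneg (a - 2/5), mul_nonneg (by linarith : (0:ℝ) ≤ a - 1/6) (by linarith : (0:ℝ) ≤ 2/5 - a), sq_nonneg a]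

/-- The cubic `λ³ - 3λ² + (3/2)λ - 1/6` has exactly one root in `(1/6, 1/2)`. -/
theorem dirk3_cubic_unique_root :
    ∃! lam : ℝ, lam ∈ Set.Ioo (1 / 6 : ℝ) (1 / 2) ∧
      lam ^ 3 - 3 * lam ^ 2 + (3 / 2) * lam - 1 / 6 = 0 := by
  have f : ℝ → ℝ := fun x => x ^ 3 - 3 * x ^ 2 + (3/2) * x - 1/6
  have hcont : ContinuousOn (fun x : ℝ => x ^ 3 - 3 * x ^ 2 + (3/2) * x - 1/6)
      (Set.Icc (1/6 : ℝ) (1/2)) := Continuous.continuousOn (by continuity)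
  have hsub := intermediate_value_Ioo' (by norm_num : (1/6 : ℝ) ≤ 1/2) hcont
  have h0 : (0 : ℝ) ∈ Set.Ioo ((fun x : ℝ => x ^ 3 - 3 * x ^ 2 + (3/2) * x - 1/6) (1/2))
      ((fun x : ℝ => x ^ 3 - 3 * x ^ 2 + (3/2) * x - 1/6) (1/6)) := by
    constructor <;> norm_num
  obtain ⟨lam, hmem, hval⟩ := hsub h0
  refine ⟨lam, ⟨hmem, by simpa using hval⟩, ?_⟩
  rintro b ⟨⟨hb1, hb2⟩, hbr⟩
  obtain ⟨hl1, hl2⟩ := hmem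
  have hval' : lam ^ 3 - 3 * lam ^ 2 + (3/2) * lam - 1/6 = 0 := by simpa using hval
  have ha : 2/5 < lam := dirk3_root_gt lam hl1 hl2 hval'
  have hb : 2/5 < b := dirk3_root_gt b hb1 hb2 hbr
  have key : (b - lam) * (b ^ 2 + b * lam + lam ^ 2 - 3 * (b + lam) + 3/2) = 0 := by
    nlinarith [hbr, hval']
  have hneg : b ^ 2 + b * lam + lam ^ 2 - 3 * (b + lam) + 3/2 < 0 := by nlinarith
  have : b - lam = 0 := by
    rcases mul_eq_zero.mp key with h | h
    · exact h
    · exact absurd h (ne_of_lt hneg)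
  linarith
end

section
/- Let u be a smooth function, x in cell Ω_j of size h, and suppose u(x) - P_opt(x) = O(h³) and u(x) - P_k(x) = O(h²) for k = L, R, and d_k - ω_k = O(h) for k = 0, L, R with Σω_k = Σd_k = 1. Then the CWENOZ reconstruction R(x) = (ω₀/d₀)(P_opt(x) - d_L P_L(x) - d_R P_R(x)) + ω_L P_L(x) + ω_R P_R(x) satisfies u(x) - R(x) = O(h³). -/
/-- Third-order accuracy of the CWENOZ reconstruction at a point: if
`|u - P_opt| ≤ C₁h³`, `|u - P_k| ≤ C₂h²` (k = L,R) and `|d_k - ω_k| ≤ C₃h`,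
with weights summing to one, then `|u - R| ≤ C h³` with the explicit constant
`C = C₁/d₀ + C₂C₃(2 + (d_L + d_R)/d₀)`. -/
theorem cwenoz_third_order_accuracy (h : ℝ) (hh : 0 < h)
    (u Popt PL PR : ℝ)
    (d0 dL dR : ℝ) (hd0 : 0 < d0) (hdL : 0 < dL) (hdR : 0 < dR)
    (hdsum : d0 + dL + dR = 1)
    (ω0 ωL ωR : ℝ) (hω0 : 0 ≤ ω0) (hωL : 0 ≤ ωL) (hωR : 0 ≤ ωR)
    (hωsum : ω0 + ωL + ωR = 1)
    (C1 C2 C3 : ℝ)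
    (hopt : |u - Popt| ≤ C1 * h ^ 3)
    (hPL : |u - PL| ≤ C2 * h ^ 2) (hPR : |u - PR| ≤ C2 * h ^ 2)
    (hw0 : |d0 - ω0| ≤ C3 * h) (hwL : |dL - ωL| ≤ C3 * h)
    (hwR : |dR - ωR| ≤ C3 * h)
    (R : ℝ)
    (hR : R = (ω0 / d0) * (Popt - dL * PL - dR * PR) + ωL * PL + ωR * PR) :
    |u - R| ≤ (C1 / d0 + C2 * C3 * (2 + (dL + dR) / d0)) * h ^ 3 := by
  have hd0' : d0 ≠ 0 := ne_of_gt hd0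
  have hC1 : 0 ≤ C1 := by
    have := abs_nonneg (u - Popt)
    nlinarith [pow_pos hh 3]
  have hC2 : 0 ≤ C2 := by
    have := abs_nonneg (u - PL)
    nlinarith [pow_pos hh 2]
  have hC3 : 0 ≤ C3 := by
    have := abs_nonneg (d0 - ω0)
    nlinarith
  have hω0le : ω0 ≤ 1 := by linarith
  have key : u - R = (ω0/d0)*(u-Popt) + ((ωL - dL) + (dL/d0)*(d0-ω0))*(u-PL)
      + ((ωR - dR) + (dR/d0)*(d0-ω0))*(u-PR) := by
    subst hR
    field_simp
    linear_combination u*ω0*hdsum - u*d0*hωsum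
  have habs0 : |ω0/d0| ≤ 1/d0 := by
    rw [abs_of_nonneg (by positivity)]
    gcongr
  have hBL : |(ωL - dL) + (dL/d0)*(d0-ω0)| ≤ C3*h + (dL/d0)*(C3*h) := by
    calc |(ωL - dL) + (dL/d0)*(d0-ω0)| ≤ |ωL-dL| + |(dL/d0)*(d0-ω0)| := abs_add_le _ _
    _ = |dL-ωL| + (dL/d0)*|d0-ω0| := by
        rw [abs_mul, abs_of_nonneg (show (0:ℝ) ≤ dL/d0 by positivity), abs_sub_comm]
    _ ≤ C3*h + (dL/d0)*(C3*h) := by gcongr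
  have hBR : |(ωR - dR) + (dR/d0)*(d0-ω0)| ≤ C3*h + (dR/d0)*(C3*h) := by
    calc |(ωR - dR) + (dR/d0)*(d0-ω0)| ≤ |ωR-dR| + |(dR/d0)*(d0-ω0)| := abs_add_le _ _
    _ = |dR-ωR| + (dR/d0)*|d0-ω0| := by
        rw [abs_mul, abs_of_nonneg (show (0:ℝ) ≤ dR/d0 by positivity), abs_sub_comm]
    _ ≤ C3*h + (dR/d0)*(C3*h) := by gcongr
  rw [key]
  calc |(ω0/d0)*(u-Popt) + ((ωL - dL) + (dL/d0)*(d0-ω0))*(u-PL)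
      + ((ωR - dR) + (dR/d0)*(d0-ω0))*(u-PR)|
      ≤ |ω0/d0| *|u-Popt| + |(ωL - dL) + (dL/d0)*(d0-ω0)| *|u-PL|
        + |(ωR - dR) + (dR/d0)*(d0-ω0)| *|u-PR| := by
        calc _ ≤ |(ω0/d0)*(u-Popt)| + |((ωL - dL) + (dL/d0)*(d0-ω0))*(u-PL)|
            + |((ωR - dR) + (dR/d0)*(d0-ω0))*(u-PR)| := abs_add_three _ _ _
        _ = _ := by rw [abs_mul, abs_mul, abs_mul]
    _ ≤ (1/d0)*(C1*h^3) + (C3*h + (dL/d0)*(C3*h))*(C2*h^2)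
        + (C3*h + (dR/d0)*(C3*h))*(C2*h^2) := by
        gcongr
    _ = (C1 / d0 + C2 * C3 * (2 + (dL + dR) / d0)) * h ^ 3 := by
        field_simp
        ring
end

section
/- Under the Z-weight definition α_k = d_k(1 + (τ/(I_k + ε))^p), ω_k = α_k/Σ_iα_i, assume τ ≤ C h^{r} and I_k + ε ≥ c h^{s} with 0 < s·p and (r - s)p ≥ 1 (C, c > 0 constants). Then |ω_k - d_k| ≤ C' h for all k and some constant C' depending only on C, c, p, d's. -/
/-- If the global smoothness indicator satisfies `τ ≤ C h^r` and the
regularized indicators satisfy `I_k + ε ≥ c h^s`, with `0 < s·p` and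
`(r-s)·p ≥ 1`, then the Z-type nonlinear weights deviate from the linear
weights by at most `C' h`, for a constant `C'` independent of `h`. -/
theorem z_weights_convergence (d : Fin 3 → ℝ) (hd : ∀ k, 0 < d k)
    (hdsum : ∑ k, d k = 1) (p : ℝ) (hp : 1 ≤ p)
    (C c r s : ℝ) (hC : 0 < C) (hc : 0 < c)
    (hsp : 0 < s * p) (hrsp : 1 ≤ (r - s) * p) :
    ∃ C' : ℝ, 0 < C' ∧
      ∀ h : ℝ, 0 < h → ∀ ε : ℝ, 0 < ε → ∀ τ : ℝ, 0 ≤ τ → τ ≤ C * h ^ r →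
        ∀ I : Fin 3 → ℝ, (∀ k, 0 ≤ I k) → (∀ k, c * h ^ s ≤ I k + ε) →
          ∀ α : Fin 3 → ℝ, (∀ k, α k = d k * (1 + (τ / (I k + ε)) ^ p)) →
            ∀ ω : Fin 3 → ℝ, (∀ k, ω k = α k / ∑ i, α i) →
              ∀ k, |ω k - d k| ≤ C' * h := by
  have hp0 : (0:ℝ) ≤ p := le_trans zero_le_one hp
  refine ⟨max ((C/c)^p) 1, lt_of_lt_of_le zero_lt_one (le_max_right _ _), ?_⟩
  intro h hh ε hε τ hτ0 hτ I hI0 hIc α hα ω hω k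
  have hcp : 0 < c * h ^ s := mul_pos hc (Real.rpow_pos_of_pos hh s)
  have hIε : ∀ j, 0 < I j + ε := fun j => lt_of_lt_of_le hcp (hIc j)
  set θ : Fin 3 → ℝ := fun j => (τ / (I j + ε)) ^ p with hθdef
  have hθ0 : ∀ j, 0 ≤ θ j := fun j =>
    Real.rpow_nonneg (div_nonneg hτ0 (hIε j).le) p
  set M : ℝ := (C/c)^p * h ^ ((r-s)*p) with hMdef
  have hCc0 : 0 ≤ C / c := (div_pos hC hc).le
  have hM0 : 0 ≤ M := mul_nonneg (Real.rpow_nonneg hCc0 p)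
    (Real.rpow_nonneg hh.le _)
  have hθM : ∀ j, θ j ≤ M := by
    intro j
    have hbase : τ / (I j + ε) ≤ (C/c) * h ^ (r - s) := by
      have h1 : τ / (I j + ε) ≤ (C * h ^ r) / (c * h ^ s) :=
        div_le_div₀ (mul_nonneg hC.le (Real.rpow_nonneg hh.le r)) hτ hcp (hIc j)
      have h2 : (C * h ^ r) / (c * h ^ s) = (C/c) * h ^ (r - s) := by
        rw [Real.rpow_sub hh]
        field_simp
      linarith [h1, h2.le]
    calc θ j ≤ ((C/c) * h ^ (r - s)) ^ p :=
          Real.rpow_le_rpow (div_nonneg hτ0 (hIε j).le) hbase hp0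
      _ = M := by
          rw [Real.mul_rpow hCc0 (Real.rpow_nonneg hh.le _),
            ← Real.rpow_mul hh.le]
  -- sum of alphas
  have hsumα : ∑ i, α i = 1 + ∑ i, d i * θ i := by
    have : ∀ i, α i = d i + d i * θ i := by
      intro i; rw [hα i]; ring
    simp only [this, Finset.sum_add_distrib, hdsum]
  set S : ℝ := ∑ i, d i * θ i with hSdef
  have hS0 : 0 ≤ S :=
    Finset.sum_nonneg fun i _ => mul_nonneg (hd i).le (hθ0 i)
  have hd1 : ∀ j, d j ≤ 1 := by
    intro j
    rw [← hdsum]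
    exact Finset.single_le_sum (fun i _ => (hd i).le) (Finset.mem_univ j)
  have hSM : S ≤ M := by
    calc S ≤ ∑ i, d i * M :=
        Finset.sum_le_sum fun i _ => mul_le_mul_of_nonneg_left (hθM i) (hd i).le
      _ = M := by rw [← Finset.sum_mul, hdsum, one_mul]
  have hden : (0:ℝ) < 1 + S := by linarith
  -- key expression
  have hωk : ω k - d k = d k * (θ k - S) / (1 + S) := by
    rw [hω k, hα k, hsumα]
    field_simp
    ring
  have hθkM : θ k ≤ M := hθM k
  have habs : |θ k - S| ≤ M := by
    rw [abs_sub_le_iff]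
    constructor <;> [linarith [hS0, hθkM]; linarith [hθ0 k, hSM]]
  -- two bounds
  have hboundM : |ω k - d k| ≤ M := by
    rw [hωk, abs_div, abs_of_pos hden, abs_mul, abs_of_pos (hd k)]
    have h1 : d k * |θ k - S| ≤ 1 * M :=
      mul_le_mul (hd1 k) habs (abs_nonneg _) zero_le_one
    calc d k * |θ k - S| / (1 + S) ≤ d k * |θ k - S| / 1 := by
          apply div_le_div_of_nonneg_left _ zero_lt_one (by linarith)
          exact mul_nonneg (hd k).le (abs_nonneg _)
      _ = d k * |θ k - S| := by ring
      _ ≤ M := by linarith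
  have hbound1 : |ω k - d k| ≤ 1 := by
    have hαpos : ∀ j, 0 < α j := by
      intro j; rw [hα j]
      exact mul_pos (hd j) (by linarith [hθ0 j])
    have hsumpos : 0 < ∑ i, α i :=
      Finset.sum_pos (fun i _ => hαpos i) Finset.univ_nonempty
    have hω0 : 0 ≤ ω k := by
      rw [hω k]; exact div_nonneg (hαpos k).le hsumpos.le
    have hω1 : ω k ≤ 1 := by
      rw [hω k, div_le_one hsumpos]
      exact Finset.single_le_sum (fun i _ => (hαpos i).le) (Finset.mem_univ k)
    rw [abs_sub_le_iff]
    constructor <;> [linarith [hd k, hω1]; linarith [hd1 k, hω0]]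
  rcases le_or_gt h 1 with h1 | h1
  · -- use M bound
    have hexp : h ^ ((r-s)*p) ≤ h := by
      calc h ^ ((r-s)*p) ≤ h ^ (1:ℝ) :=
            Real.rpow_le_rpow_of_exponent_ge hh h1 hrsp
        _ = h := Real.rpow_one h
    calc |ω k - d k| ≤ M := hboundM
      _ = (C/c)^p * h ^ ((r-s)*p) := rfl
      _ ≤ (C/c)^p * h :=
          mul_le_mul_of_nonneg_left hexp (Real.rpow_nonneg hCc0 p)
      _ ≤ max ((C/c)^p) 1 * h :=
          mul_le_mul_of_nonneg_right (le_max_left _ _) hh.le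
  · calc |ω k - d k| ≤ 1 := hbound1
      _ ≤ 1 * h := by linarith
      _ ≤ max ((C/c)^p) 1 * h :=
          mul_le_mul_of_nonneg_right (le_max_right _ _) hh.le
end
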